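/- arXiv:2109.05222 — 2 statements merged into one kernel-verified Lean document; each statement's English description precedes it below -/
import Mathlib

section
/- Let a ≥ b > 0 and c > 0 be real numbers. Then the function f(x) = log((a·x + c)/(b·x + c)) is concave on [0, ∞). -/
/-!
On `x > -c/b` one has `(a x + c)/(b x + c) = a/b - ((a - b) c / b²) · (x + c/b)⁻¹`, so for `a ≥ b`
the ratio is a nonnegative multiple of the convex function `(x + c/b)⁻¹` subtracted from a
constant, hence concave. Since `log` is concave and increasing, the logarithm of a positive
concave function is concave.
-/

open Set Real

theorem ConcaveOn.log {E : Type*} [AddCommMonoid E] [Module ℝ E] {s : Set E} {f : E → ℝ}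
    (hf : ConcaveOn ℝ s f) (hpos : ∀ x ∈ s, 0 < f x) :
    ConcaveOn ℝ s fun x => Real.log (f x) :=
  ⟨hf.1, fun x hx y hy a b ha hb hab =>
    calc a • Real.log (f x) + b • Real.log (f y) ≤ Real.log (a • f x + b • f y) :=
          strictConcaveOn_log_Ioi.concaveOn.2 (hpos x hx) (hpos y hy) ha hb hab
      _ ≤ Real.log (f (a • x + b • y)) :=
          log_le_log (convex_Ioi (0 : ℝ) (hpos x hx) (hpos y hy) ha hb hab)
            (hf.2 hx hy ha hb hab)⟩

theorem convexOn_inv_add (d : ℝ) : ConvexOn ℝ (Ioi (-d)) fun x => (x + d)⁻¹ := by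
  have h := (convexOn_zpow (𝕜 := ℝ) (-1)).translate_right d
  have hs : (fun z => d + z) ⁻¹' Ioi 0 = Ioi (-d) := by
    ext; simp [neg_lt_iff_pos_add']
  rw [hs] at h
  exact h.congr fun x _ => by simp [add_comm]

theorem concaveOn_div_of_mul_le {p q r s : ℝ} (hr : 0 < r) (h : q * r ≤ p * s) :
    ConcaveOn ℝ (Ioi (-(s / r))) fun x => (p * x + q) / (r * x + s) := by
  have hk : 0 ≤ (p * s - q * r) / r ^ 2 := div_nonneg (sub_nonneg.2 h) (by positivity)
  refine (((convexOn_inv_add (s / r)).smul hk).neg.add_const (p / r)).congr fun x hx => ?_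
  have hx : 0 < r * x + s := by
    have hs : r * (s / r) = s := mul_div_cancel₀ s hr.ne'
    nlinarith [mem_Ioi.1 hx]
  simp only [Pi.add_apply, Pi.neg_apply, smul_eq_mul]
  field_simp
  ring

theorem concave_log_ratio (a b c : ℝ) (hab : b ≤ a) (hb : 0 < b) (hc : 0 < c) :
    ConcaveOn ℝ (Set.Ici (0 : ℝ)) (fun x => Real.log ((a * x + c) / (b * x + c))) := by
  have ha : 0 < a := hb.trans_le hab
  refine ConcaveOn.log ?_ fun x (hx : 0 ≤ x) => by positivity
  exact (concaveOn_div_of_mul_le hb (by nlinarith)).subset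
    (fun x (hx : 0 ≤ x) => (neg_neg_of_pos (by positivity)).trans_le hx) (convex_Ici 0)
end

section
/- Consider projected SGD on a convex set 𝒳 ⊂ ℝ^d of diameter at most D, minimizing a convex function f: x_{t+1} = Γ_𝒳(x_t − η·ĝ_t), where Γ_𝒳 is Euclidean projection and ĝ_t is a random vector satisfying ‖E[ĝ_t | x_t] − g_t‖ ≤ β for some subgradient g_t ∈ ∂f(x_t) and E[‖ĝ_t‖² | x_t] ≤ α². Then with η = D/(α√T), the average iterate x̄_T = (1/T)∑_{t=1}^{T} x_t satisfies E[f(x̄_T)] − min_{x∈𝒳} f(x) ≤ D·(α/√T + β). -/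
/-!
Along the iterates, `‖x t - z‖²` drops by `2η⟪ĝ t, x t - z⟫` up to the error `η²‖ĝ t‖²`,
because the projection is nonexpansive towards `z ∈ 𝒳`. Since `x t - z` is measurable with
respect to `σ(x t)`, in expectation `ĝ t` may be replaced by `E[ĝ t | x t]`, which is within `β`
of a subgradient; so `E f(x t) - f z` is bounded by the decrease of `E‖x t - z‖²` divided by `2η`,
plus `ηα²/2 + βD`. Summing telescopes, and Jensen's inequality passes to the averaged iterate.
-/

open MeasureTheory Finset
open scoped RealInnerProductSpace

section InnerProductSpace

variable {E : Type*} [NormedAddCommGroup E] [InnerProductSpace ℝ E]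

lemma norm_sub_sq_le_of_le_norm_step {y y' v z : E} {η : ℝ}
    (h : ‖y' - z‖ ≤ ‖y - η • v - z‖) :
    ‖y' - z‖ ^ 2 ≤ ‖y - z‖ ^ 2 - 2 * η * ⟪v, y - z⟫ + η ^ 2 * ‖v‖ ^ 2 := by
  have hexp : ‖y - η • v - z‖ ^ 2 = ‖y - z‖ ^ 2 - 2 * η * ⟪v, y - z⟫ + η ^ 2 * ‖v‖ ^ 2 := by
    rw [sub_right_comm, norm_sub_sq_real, real_inner_smul_right, norm_smul, mul_pow,
      Real.norm_eq_abs, sq_abs, real_inner_comm]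
    ring
  exact hexp ▸ pow_le_pow_left₀ (norm_nonneg _) h 2

lemma real_inner_le_mul_of_norm_le {a v : E} {β D : ℝ} (ha : ‖a‖ ≤ β) (hv : ‖v‖ ≤ D) :
    ⟪a, v⟫ ≤ β * D :=
  (real_inner_le_norm a v).trans <|
    mul_le_mul ha hv (norm_nonneg v) ((norm_nonneg a).trans ha)

lemma sub_le_inner_of_biased_subgradient {f : E → ℝ} {y z g ĝ : E} {β D : ℝ}
    (hsub : f y + ⟪g, z - y⟫ ≤ f z) (hbias : ‖ĝ - g‖ ≤ β) (hyz : ‖y - z‖ ≤ D) :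
    f y - f z ≤ ⟪ĝ, y - z⟫ + β * D := by
  have hg : ⟪g, z - y⟫ = -⟪ĝ, y - z⟫ - ⟪g - ĝ, y - z⟫ := by
    rw [inner_sub_left, ← neg_sub y z, inner_neg_right]
    ring
  linarith [real_inner_le_mul_of_norm_le ((norm_sub_rev g ĝ).trans_le hbias) hyz]

end InnerProductSpace

lemma sum_Icc_le_sub_add_nsmul_of_le_sub_succ {α : Type*} [AddCommGroup α] [PartialOrder α]
    [IsOrderedAddMonoid α] {a N : ℕ → α} {c : α} (h : ∀ t, a t ≤ N t - N (t + 1) + c) (T : ℕ) :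
    ∑ t ∈ Icc 1 T, a t ≤ N 1 - N (T + 1) + T • c := by
  induction T with
  | zero => simp
  | succ T ih =>
    rw [sum_Icc_succ_top (by omega), succ_nsmul]
    calc ∑ t ∈ Icc 1 T, a t + a (T + 1)
        ≤ (N 1 - N (T + 1) + T • c) + (N (T + 1) - N (T + 1 + 1) + c) := add_le_add ih (h _)
      _ = N 1 - N (T + 1 + 1) + (T • c + c) := by abel

lemma ConvexOn.integral_comp_average_le {Ω V ι : Type*} [MeasurableSpace Ω] {μ : Measure Ω}
    [AddCommGroup V] [Module ℝ V] {s : Set V} {f : V → ℝ} (hf : ConvexOn ℝ s f)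
    {I : Finset ι} (hI : I.Nonempty) {x : ι → Ω → V} (hxs : ∀ i ∈ I, ∀ ω, x i ω ∈ s)
    (hfx : ∀ i ∈ I, Integrable (fun ω => f (x i ω)) μ)
    (havg : Integrable (fun ω => f ((#I : ℝ)⁻¹ • ∑ i ∈ I, x i ω)) μ) :
    ∫ ω, f ((#I : ℝ)⁻¹ • ∑ i ∈ I, x i ω) ∂μ ≤ (#I : ℝ)⁻¹ * ∑ i ∈ I, ∫ ω, f (x i ω) ∂μ := by
  have hjensen : ∀ ω, f ((#I : ℝ)⁻¹ • ∑ i ∈ I, x i ω) ≤ (#I : ℝ)⁻¹ * ∑ i ∈ I, f (x i ω) := by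
    intro ω
    have := hf.map_sum_le (w := fun _ => (#I : ℝ)⁻¹) (p := fun i => x i ω)
      (fun _ _ => by positivity) (by simp [hI.card_ne_zero]) (fun i hi => hxs i hi ω)
    simpa only [← smul_sum, smul_eq_mul, ← mul_sum] using this
  rw [← integral_finsetSum _ hfx, ← integral_const_mul]
  exact integral_mono havg ((integrable_finsetSum _ hfx).const_mul _) hjensen

section Integral

variable {Ω E : Type*} {m mΩ : MeasurableSpace Ω} {μ : Measure Ω}

lemma integral_le_of_ae_condExp_le [IsProbabilityMeasure μ] (hm : m ≤ mΩ) {F : Ω → ℝ} {c : ℝ}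
    (hF : ∀ᵐ ω ∂μ, (μ[F|m]) ω ≤ c) : ∫ ω, F ω ∂μ ≤ c := by
  rw [← integral_condExp hm]
  simpa using integral_mono_ae integrable_condExp (integrable_const c) hF

variable [NormedAddCommGroup E]

lemma integrable_norm_sub_sq_of_norm_sub_le [IsFiniteMeasure μ] {Y : Ω → E} {z : E} {D : ℝ}
    (hY : AEStronglyMeasurable Y μ) (hYD : ∀ ω, ‖Y ω - z‖ ≤ D) :
    Integrable (fun ω => ‖Y ω - z‖ ^ 2) μ :=
  .of_bound ((hY.sub aestronglyMeasurable_const).norm.pow 2) (D ^ 2) <| ae_of_all _ fun ω => by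
    rw [Real.norm_eq_abs, abs_pow, abs_norm]
    exact pow_le_pow_left₀ (norm_nonneg _) (hYD ω) 2

variable [InnerProductSpace ℝ E]

lemma integrable_inner_of_norm_le_right {F Y : Ω → E} {C : ℝ} (hF : Integrable F μ)
    (hY : AEStronglyMeasurable Y μ) (hYC : ∀ ω, ‖Y ω‖ ≤ C) :
    Integrable (fun ω => ⟪F ω, Y ω⟫) μ :=
  (innerSL ℝ).integrable_of_bilin_of_bdd_right C hF hY (ae_of_all _ hYC)

lemma two_mul_integral_inner_le_of_step [IsFiniteMeasure μ] {y y' ĝ : Ω → E} {z : E} {η D : ℝ}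
    (hy : AEStronglyMeasurable y μ) (hy' : AEStronglyMeasurable y' μ)
    (hyD : ∀ ω, ‖y ω - z‖ ≤ D) (hy'D : ∀ ω, ‖y' ω - z‖ ≤ D)
    (hĝ : Integrable ĝ μ) (hĝ2 : Integrable (fun ω => ‖ĝ ω‖ ^ 2) μ)
    (hstep : ∀ ω, ‖y' ω - z‖ ≤ ‖y ω - η • ĝ ω - z‖) :
    2 * η * ∫ ω, ⟪ĝ ω, y ω - z⟫ ∂μ ≤
      ∫ ω, ‖y ω - z‖ ^ 2 ∂μ - ∫ ω, ‖y' ω - z‖ ^ 2 ∂μ + η ^ 2 * ∫ ω, ‖ĝ ω‖ ^ 2 ∂μ := by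
  have hdist := integrable_norm_sub_sq_of_norm_sub_le hy hyD
  have hdist' := integrable_norm_sub_sq_of_norm_sub_le hy' hy'D
  have hinner := integrable_inner_of_norm_le_right hĝ (hy.sub aestronglyMeasurable_const) hyD
  have hdiff : Integrable (fun ω => ‖y ω - z‖ ^ 2 - ‖y' ω - z‖ ^ 2) μ := hdist.sub hdist'
  rw [← integral_const_mul, ← integral_const_mul, ← integral_sub hdist hdist',
    ← integral_add hdiff (hĝ2.const_mul _)]
  refine integral_mono (hinner.const_mul _) (hdiff.add (hĝ2.const_mul _)) fun ω => ?_
  linarith [norm_sub_sq_le_of_le_norm_step (hstep ω)]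

variable [CompleteSpace E]

lemma integral_inner_condExp_left [IsFiniteMeasure μ] (hm : m ≤ mΩ)
    {F Y : Ω → E} {C : ℝ} (hF : Integrable F μ) (hY : StronglyMeasurable[m] Y)
    (hYC : ∀ ω, ‖Y ω‖ ≤ C) :
    ∫ ω, ⟪(μ[F|m]) ω, Y ω⟫ ∂μ = ∫ ω, ⟪F ω, Y ω⟫ ∂μ := by
  have hFY := integrable_inner_of_norm_le_right hF (hY.mono hm).aestronglyMeasurable hYC
  rw [← integral_condExp hm (f := fun ω => ⟪F ω, Y ω⟫)]
  exact integral_congr_ae (condExp_bilin_of_stronglyMeasurable_right (innerSL ℝ) hY hFY hF).symm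

lemma integral_sub_le_integral_inner_add_of_biased_subgradient [IsProbabilityMeasure μ]
    (hm : m ≤ mΩ) {f : E → ℝ} {y ĝ g : Ω → E} {z : E} {β D : ℝ}
    (hy : StronglyMeasurable[m] y) (hyD : ∀ ω, ‖y ω - z‖ ≤ D) (hĝ : Integrable ĝ μ)
    (hfy : Integrable (fun ω => f (y ω)) μ) (hsub : ∀ ω, f (y ω) + ⟪g ω, z - y ω⟫ ≤ f z)
    (hbias : ∀ᵐ ω ∂μ, ‖(μ[ĝ|m]) ω - g ω‖ ≤ β) :
    ∫ ω, f (y ω) ∂μ - f z ≤ ∫ ω, ⟪ĝ ω, y ω - z⟫ ∂μ + β * D := by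
  have hY : StronglyMeasurable[m] fun ω => y ω - z := hy.sub stronglyMeasurable_const
  rw [← integral_inner_condExp_left hm hĝ hY hyD]
  have hpointwise : ∀ᵐ ω ∂μ, f (y ω) - f z ≤ ⟪(μ[ĝ|m]) ω, y ω - z⟫ + β * D := by
    filter_upwards [hbias] with ω hω
    exact sub_le_inner_of_biased_subgradient (hsub ω) hω (hyD ω)
  have hinner := integrable_inner_of_norm_le_right (integrable_condExp (m := m) (μ := μ) (f := ĝ))
    (hY.mono hm).aestronglyMeasurable hyD
  calc ∫ ω, f (y ω) ∂μ - f z = ∫ ω, (f (y ω) - f z) ∂μ := by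
        simp [integral_sub hfy (integrable_const _)]
    _ ≤ ∫ ω, (⟪(μ[ĝ|m]) ω, y ω - z⟫ + β * D) ∂μ :=
        integral_mono_ae (hfy.sub (integrable_const _)) (hinner.add (integrable_const _))
          hpointwise
    _ = ∫ ω, ⟪(μ[ĝ|m]) ω, y ω - z⟫ ∂μ + β * D := by
        simp [integral_add hinner (integrable_const _)]

lemma two_mul_integral_sub_le_of_psgd_step [IsProbabilityMeasure μ] (hm : m ≤ mΩ)
    {f : E → ℝ} {y y' ĝ g : Ω → E} {z : E} {η α β D : ℝ} (hη : 0 ≤ η)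
    (hy : StronglyMeasurable[m] y) (hy' : AEStronglyMeasurable y' μ)
    (hyD : ∀ ω, ‖y ω - z‖ ≤ D) (hy'D : ∀ ω, ‖y' ω - z‖ ≤ D)
    (hĝ : Integrable ĝ μ) (hĝ2 : Integrable (fun ω => ‖ĝ ω‖ ^ 2) μ)
    (hfy : Integrable (fun ω => f (y ω)) μ)
    (hstep : ∀ ω, ‖y' ω - z‖ ≤ ‖y ω - η • ĝ ω - z‖)
    (hsub : ∀ ω, f (y ω) + ⟪g ω, z - y ω⟫ ≤ f z)
    (hbias : ∀ᵐ ω ∂μ, ‖(μ[ĝ|m]) ω - g ω‖ ≤ β)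
    (hsecond : ∀ᵐ ω ∂μ, (μ[fun ω => ‖ĝ ω‖ ^ 2|m]) ω ≤ α ^ 2) :
    2 * η * (∫ ω, f (y ω) ∂μ - f z) ≤
      ∫ ω, ‖y ω - z‖ ^ 2 ∂μ - ∫ ω, ‖y' ω - z‖ ^ 2 ∂μ + (η ^ 2 * α ^ 2 + 2 * η * (β * D)) := by
  have hregret := integral_sub_le_integral_inner_add_of_biased_subgradient hm hy hyD hĝ hfy
    hsub hbias
  have hdescent := two_mul_integral_inner_le_of_step (hy.mono hm).aestronglyMeasurable hy'
    hyD hy'D hĝ hĝ2 hstep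
  have hmoment := integral_le_of_ae_condExp_le hm hsecond
  linarith [mul_le_mul_of_nonneg_left hregret (by positivity : 0 ≤ 2 * η),
    mul_le_mul_of_nonneg_left hmoment (sq_nonneg η)]

end Integral

lemma psgd_bound_at_tuned_step_size {D α β T : ℝ} (hD : 0 < D) (hα : 0 < α) (hT : 0 < T) :
    (D ^ 2 + T * ((D / (α * √T)) ^ 2 * α ^ 2 + 2 * (D / (α * √T)) * (β * D))) /
      (2 * (D / (α * √T)) * T) = D * (α / √T + β) := by
  have hs : 0 < √T := Real.sqrt_pos.mpr hT
  have hsq : T = √T ^ 2 := (Real.sq_sqrt hT.le).symm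
  set s := √T
  rw [hsq]
  field_simp
  ring

theorem psgd_convergence_general {Ω : Type*} [MeasurableSpace Ω]
    (μ : Measure Ω) [IsProbabilityMeasure μ]
    (d : ℕ) (𝒳 : Set (EuclideanSpace ℝ (Fin d)))
    (D α β : ℝ) (hD : 0 < D) (hα : 0 < α)
    (hdiam : ∀ x ∈ 𝒳, ∀ y ∈ 𝒳, ‖x - y‖ ≤ D)
    (f : EuclideanSpace ℝ (Fin d) → ℝ) (hf : ConvexOn ℝ 𝒳 f)
    (Γ : EuclideanSpace ℝ (Fin d) → EuclideanSpace ℝ (Fin d))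
    (hΓmem : ∀ y, Γ y ∈ 𝒳)
    (hΓproj : ∀ y, ∀ z ∈ 𝒳, ‖Γ y - z‖ ≤ ‖y - z‖)
    (T : ℕ) (hT : 1 ≤ T)
    (x ghat g : ℕ → Ω → EuclideanSpace ℝ (Fin d))
    (hxm : ∀ t, Measurable (x t))
    (hghat_int : ∀ t, Integrable (ghat t) μ)
    (hghat_sq_int : ∀ t, Integrable (fun ω => ‖ghat t ω‖ ^ 2) μ)
    (hx0 : ∀ ω, x 0 ω ∈ 𝒳)
    -- PSGD update with learning rate η = D / (α √T):
    (hupdate : ∀ t ω,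
      x (t + 1) ω = Γ (x t ω - (D / (α * Real.sqrt T)) • ghat t ω))
    -- g t ω is a subgradient of f at x t ω (over 𝒳):
    (hsubgrad : ∀ t ω, ∀ z ∈ 𝒳,
      f (x t ω) + inner ℝ (g t ω) (z - x t ω) ≤ f z)
    -- bias of the stochastic subgradient, conditionally on x t:
    (hbias : ∀ t, ∀ᵐ ω ∂μ,
      ‖(μ[ghat t | MeasurableSpace.comap (x t) inferInstance]) ω - g t ω‖ ≤ β)
    -- conditional second moment bound:
    (hsecond : ∀ t, ∀ᵐ ω ∂μ,
      (μ[fun ω' => ‖ghat t ω'‖ ^ 2 | MeasurableSpace.comap (x t) inferInstance]) ω ≤ α ^ 2)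
    (hf_int : ∀ t, Integrable (fun ω => f (x t ω)) μ)
    (hfavg_int :
      Integrable (fun ω => f (((T : ℝ))⁻¹ • ∑ t ∈ Finset.Icc 1 T, x t ω)) μ) :
    ∀ xstar ∈ 𝒳,
      (∫ ω, f (((T : ℝ))⁻¹ • ∑ t ∈ Finset.Icc 1 T, x t ω) ∂μ) - f xstar ≤
        D * (α / Real.sqrt T + β) := by
  intro z hz
  have hmem : ∀ t ω, x t ω ∈ 𝒳 := fun t ω => by
    cases t with
    | zero => exact hx0 ω
    | succ t => exact hupdate t ω ▸ hΓmem _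
  have hT0 : (0 : ℝ) < T := by exact_mod_cast hT
  have hcard : #(Icc 1 T) = T := by simp
  set η := D / (α * √T)
  have hη : 0 < η := by positivity
  have hdist : ∀ t ω, ‖x t ω - z‖ ≤ D := fun t ω => hdiam _ (hmem t ω) _ hz
  have hstep (t : ℕ) := two_mul_integral_sub_le_of_psgd_step (hxm t).comap_le hη.le
    (comap_measurable (x t)).stronglyMeasurable (hxm (t + 1)).aestronglyMeasurable
    (hdist t) (hdist (t + 1)) (hghat_int t) (hghat_sq_int t) (hf_int t)
    (fun ω => hupdate t ω ▸ hΓproj _ z hz) (fun ω => hsubgrad t ω z hz) (hbias t) (hsecond t)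
  have hregret := sum_Icc_le_sub_add_nsmul_of_le_sub_succ hstep T
  rw [← mul_sum, sum_sub_distrib, sum_const, hcard, nsmul_eq_mul, nsmul_eq_mul] at hregret
  have hjensen := hf.integral_comp_average_le ⟨1, mem_Icc.mpr ⟨le_rfl, hT⟩⟩ (fun t _ => hmem t)
    (fun t _ => hf_int t) (by rwa [hcard])
  rw [hcard, le_inv_mul_iff₀ hT0] at hjensen
  have hN1 : ∫ ω, ‖x 1 ω - z‖ ^ 2 ∂μ ≤ D ^ 2 := by
    simpa using integral_mono
      (integrable_norm_sub_sq_of_norm_sub_le (μ := μ) (hxm 1).aestronglyMeasurable (hdist 1))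
      (integrable_const (D ^ 2)) fun ω => pow_le_pow_left₀ (norm_nonneg _) (hdist 1 ω) 2
  have hNT : 0 ≤ ∫ ω, ‖x (T + 1) ω - z‖ ^ 2 ∂μ := integral_nonneg fun ω => by positivity
  rw [← psgd_bound_at_tuned_step_size hD hα hT0, le_div_iff₀ (by positivity)]
  linarith [mul_le_mul_of_nonneg_left hjensen (by positivity : 0 ≤ 2 * η)]

/-- Convergence of projected SGD with biased, bounded-second-moment stochastic
subgradients, sent through a projection map `Γ` onto `𝒳` (which is nonexpansive
towards points of `𝒳`, as the Euclidean projection is). -/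
theorem psgd_convergence {Ω : Type*} [MeasurableSpace Ω]
    (μ : Measure Ω) [IsProbabilityMeasure μ]
    (d : ℕ) (𝒳 : Set (EuclideanSpace ℝ (Fin d)))
    (hconv : Convex ℝ 𝒳) (hclosed : IsClosed 𝒳) (hne : 𝒳.Nonempty)
    (D α β : ℝ) (hD : 0 < D) (hα : 0 < α) (hβ : 0 ≤ β)
    (hdiam : ∀ x ∈ 𝒳, ∀ y ∈ 𝒳, ‖x - y‖ ≤ D)
    (f : EuclideanSpace ℝ (Fin d) → ℝ) (hf : ConvexOn ℝ 𝒳 f)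
    (Γ : EuclideanSpace ℝ (Fin d) → EuclideanSpace ℝ (Fin d))
    (hΓmem : ∀ y, Γ y ∈ 𝒳)
    (hΓproj : ∀ y, ∀ z ∈ 𝒳, ‖Γ y - z‖ ≤ ‖y - z‖)
    (T : ℕ) (hT : 1 ≤ T)
    (x ghat g : ℕ → Ω → EuclideanSpace ℝ (Fin d))
    (hxm : ∀ t, Measurable (x t)) (hghatm : ∀ t, Measurable (ghat t))
    (hgm : ∀ t, Measurable (g t))
    (hghat_int : ∀ t, Integrable (ghat t) μ)
    (hghat_sq_int : ∀ t, Integrable (fun ω => ‖ghat t ω‖ ^ 2) μ)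
    (hx0 : ∀ ω, x 0 ω ∈ 𝒳)
    -- PSGD update with learning rate η = D / (α √T):
    (hupdate : ∀ t ω,
      x (t + 1) ω = Γ (x t ω - (D / (α * Real.sqrt T)) • ghat t ω))
    -- g t ω is a subgradient of f at x t ω (over 𝒳):
    (hsubgrad : ∀ t ω, ∀ z ∈ 𝒳,
      f (x t ω) + inner ℝ (g t ω) (z - x t ω) ≤ f z)
    -- bias of the stochastic subgradient, conditionally on x t:
    (hbias : ∀ t, ∀ᵐ ω ∂μ,
      ‖(μ[ghat t | MeasurableSpace.comap (x t) inferInstance]) ω - g t ω‖ ≤ β)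
    -- conditional second moment bound:
    (hsecond : ∀ t, ∀ᵐ ω ∂μ,
      (μ[fun ω' => ‖ghat t ω'‖ ^ 2 | MeasurableSpace.comap (x t) inferInstance]) ω ≤ α ^ 2)
    (hf_int : ∀ t, Integrable (fun ω => f (x t ω)) μ)
    (hfavg_int :
      Integrable (fun ω => f (((T : ℝ))⁻¹ • ∑ t ∈ Finset.Icc 1 T, x t ω)) μ) :
    ∀ xstar ∈ 𝒳,
      (∫ ω, f (((T : ℝ))⁻¹ • ∑ t ∈ Finset.Icc 1 T, x t ω) ∂μ) - f xstar ≤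
        D * (α / Real.sqrt T + β) :=
  psgd_convergence_general μ d 𝒳 D α β hD hα hdiam f hf Γ hΓmem hΓproj T hT x ghat g hxm hghat_int
    hghat_sq_int hx0 hupdate hsubgrad hbias hsecond hf_int hfavg_int
end
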